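/- arXiv:2206.12303 — 10 statements merged into one kernel-verified Lean document; each statement's English description precedes it below -/
import Mathlib

section
/- Let i < i' be block indices (so b_i > b_{i'}) and let j, j' be stacks. If either b_i ≤ σ_j, or (b_i > σ_{j'} and σ_j ≤ σ_{j'}), then c(i,j) + c(i',j') ≤ c(i,j') + c(i',j). -/
/-- Cost of assigning a block with index `bi` to a stack with value `s`:
`1` if `bi > s` (the block becomes blocking), `0` otherwise. -/
def blkCost (bi s : ℕ) : ℕ := if s < bi then 1 else 0

/-- Total cost `C(f)` of an assignment `f` of the blocks `b` to stacks with values `σ`. -/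
def totalCost {m w : ℕ} (b : Fin m → ℕ) (σ : Fin w → ℕ) (f : Fin m → Fin w) : ℕ :=
  ∑ i, blkCost (b i) (σ (f i))

/-- An assignment is capacity-feasible if every stack `j` receives at most `δ j` blocks. -/
def Feasible {m w : ℕ} (δ : Fin w → ℕ) (f : Fin m → Fin w) : Prop :=
  ∀ j, (Finset.univ.filter fun i => f i = j).card ≤ δ j

/-- Exchange inequality for the assignment costs: if `i < i'`
(so `b i > b i'`) and either `b i ≤ σ j`, or `b i > σ j'` and `σ j ≤ σ j'`, then
`c(i,j) + c(i',j') ≤ c(i,j') + c(i',j)`. -/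
theorem cost_exchange {w m : ℕ} (hw : 0 < w) (σ : Fin w → ℕ) (b : Fin m → ℕ)
    (hb : StrictAnti b) (i i' : Fin m) (hii' : i < i') (j j' : Fin w)
    (hcase : b i ≤ σ j ∨ (σ j' < b i ∧ σ j ≤ σ j')) :
    blkCost (b i) (σ j) + blkCost (b i') (σ j') ≤
      blkCost (b i) (σ j') + blkCost (b i') (σ j) := by
  have := hb hii'
  simp only [blkCost]
  split_ifs <;> omega
end

section
/- Assume Σ_j δ_j ≥ m. Then the minimum number of blocking blocks, taken over all placement orders φ and all capacity-feasible placements of the blocks b_1,…,b_m with order φ, equals the minimum of C(f) over all capacity-feasible assignments f. (That is, GMBIP with the order constraint relaxed is equivalent to the minimum-cost assignment problem ASS(B,w,δ,σ).) -/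
open Classical in
/-- Number of blocking blocks of the placement that puts block `b (φ i)` (placed `i`-th)
on stack `a i`: block `b (φ i)` is blocking if `b (φ i) > σ (a i)` or some smaller block
of `B` was placed earlier on the same stack. -/
noncomputable def placementBlocking {m w : ℕ} (b : Fin m → ℕ) (σ : Fin w → ℕ)
    (φ : Equiv.Perm (Fin m)) (a : Fin m → Fin w) : ℕ :=
  (Finset.univ.filter fun i : Fin m =>
    σ (a i) < b (φ i) ∨ ∃ i', i' < i ∧ a i' = a i ∧ b (φ i') < b (φ i)).card

lemma placement_id {m w : ℕ} (σ : Fin w → ℕ) (b : Fin m → ℕ) (hb : StrictAnti b)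
    (f : Fin m → Fin w) : placementBlocking b σ 1 f = totalCost b σ f := by
  classical
  unfold placementBlocking totalCost blkCost
  rw [Finset.card_filter]
  apply Finset.sum_congr rfl
  intro i _
  have this : (σ (f i) < b i ∨
      ∃ i', i' < i ∧ f i' = f i ∧ b i' < b i)
      ↔ σ (f i) < b i := by
    constructor
    · rintro (h | ⟨i', hlt, _, hbb⟩)
      · exact h
      · exact absurd hbb (not_lt.2 (hb hlt).le)
    · exact Or.inl
  simp only [Equiv.Perm.coe_one, id_eq, this]

lemma assign_of_placement {m w : ℕ} (σ : Fin w → ℕ) (δ : Fin w → ℕ) (b : Fin m → ℕ)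
    (φ : Equiv.Perm (Fin m)) (a : Fin m → Fin w) (ha : Feasible δ a) :
    Feasible δ (a ∘ φ.symm) ∧ totalCost b σ (a ∘ φ.symm) ≤ placementBlocking b σ φ a := by
  classical
  constructor
  · intro j
    have hc : (Finset.univ.filter fun i => (a ∘ φ.symm) i = j).card
        = (Finset.univ.filter fun i => a i = j).card := by
      apply Finset.card_bij' (fun i _ => φ.symm i) (fun i _ => φ i) <;> simp
    rw [hc]; exact ha j
  · unfold totalCost placementBlocking blkCost
    have h1 : ∑ i, (if σ ((a ∘ φ.symm) i) < b i then 1 else 0)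
        = ∑ i, (if σ (a i) < b (φ i) then 1 else 0) := by
      rw [← Equiv.sum_comp φ]
      simp
    rw [h1, Finset.card_filter]
    apply Finset.sum_le_sum
    intro i _
    by_cases h : σ (a i) < b (φ i)
    · simp [h]
    · simp [h]

/-- With `∑ j, δ j ≥ m`, the minimum number of blocking blocks over all
placement orders `φ` and all capacity-feasible placements equals the minimum cost over all
capacity-feasible assignments: GMBIP with the order relaxed is equivalent to
the assignment problem `ASS(B, w, δ, σ)`. -/
theorem gmbipB_eq_assignment {w m : ℕ} (hw : 0 < w) (σ δ : Fin w → ℕ)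
    (b : Fin m → ℕ) (hb : StrictAnti b) (hcap : m ≤ ∑ j, δ j) :
    sInf {c : ℕ | ∃ (φ : Equiv.Perm (Fin m)) (a : Fin m → Fin w),
        Feasible δ a ∧ c = placementBlocking b σ φ a} =
      sInf {c : ℕ | ∃ f : Fin m → Fin w, Feasible δ f ∧ c = totalCost b σ f} := by
  classical
  set P := {c : ℕ | ∃ (φ : Equiv.Perm (Fin m)) (a : Fin m → Fin w),
      Feasible δ a ∧ c = placementBlocking b σ φ a} with hPdef
  set A := {c : ℕ | ∃ f : Fin m → Fin w, Feasible δ f ∧ c = totalCost b σ f} with hAdef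
  have hAP : A ⊆ P := by
    rintro c ⟨f, hf, rfl⟩
    exact ⟨1, f, hf, (placement_id σ b hb f).symm⟩
  by_cases hP : P.Nonempty
  · have hA : A.Nonempty := by
      obtain ⟨c, φ, a, ha, rfl⟩ := hP
      exact ⟨totalCost b σ (a ∘ φ.symm), a ∘ φ.symm,
        (assign_of_placement σ δ b φ a ha).1, rfl⟩
    apply le_antisymm
    · exact Nat.sInf_le (hAP (Nat.sInf_mem hA))
    · obtain ⟨φ, a, ha, hc⟩ := Nat.sInf_mem hP
      obtain ⟨hfe, hle⟩ := assign_of_placement σ δ b φ a ha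
      calc sInf A ≤ totalCost b σ (a ∘ φ.symm) := Nat.sInf_le ⟨a ∘ φ.symm, hfe, rfl⟩
        _ ≤ placementBlocking b σ φ a := hle
        _ = sInf P := hc.symm
  · have hA : ¬ A.Nonempty := fun h => hP (h.mono hAP)
    rw [Set.not_nonempty_iff_eq_empty] at hP hA
    rw [hP, hA]
end

section
/- For every permutation φ of {1,…,m} and every placement a with order φ (with no capacity restriction), the number of blocking blocks of the placement is at least #{ i : b_i > max_{1 ≤ j ≤ w} σ_j }. Consequently G^T ≥ G^Z, where G^T is the minimum number of blocking blocks over all placements with order φ ignoring capacities, and G^Z = #{ i : b_i > max_j σ_j }. (This is the per-iteration inequality showing that the lower bound LB4 dominates the lower bound LB3.) -/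
theorem card_filter_sup_lt_le_placementBlocking {m w : ℕ} (σ : Fin w → ℕ) (b : Fin m → ℕ)
    (φ : Equiv.Perm (Fin m)) (a : Fin m → Fin w) :
    (Finset.univ.filter fun i : Fin m => Finset.univ.sup σ < b i).card ≤
      placementBlocking b σ φ a := by
  refine Finset.card_le_card_of_injOn φ.symm (fun i hi => ?_) φ.symm.injective.injOn
  simp only [Finset.coe_filter, Finset.mem_univ, true_and, Set.mem_ofPred_eq] at hi ⊢
  -- a block above the highest stack value is blocking on whichever stack it lands
  left
  calc σ (a (φ.symm i)) ≤ Finset.univ.sup σ := Finset.le_sup (Finset.mem_univ _)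
    _ < b (φ (φ.symm i)) := by rwa [Equiv.apply_symm_apply]

theorem GT_ge_GZ_general {w m : ℕ} (hw : 0 < w) (σ : Fin w → ℕ)
    (b : Fin m → ℕ) :
    (∀ (φ : Equiv.Perm (Fin m)) (a : Fin m → Fin w),
        (Finset.univ.filter fun i : Fin m => Finset.univ.sup σ < b i).card ≤
          placementBlocking b σ φ a) ∧
      ∀ φ : Equiv.Perm (Fin m),
        (Finset.univ.filter fun i : Fin m => Finset.univ.sup σ < b i).card ≤
          sInf {c : ℕ | ∃ a : Fin m → Fin w, c = placementBlocking b σ φ a} := by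
  refine ⟨card_filter_sup_lt_le_placementBlocking σ b, fun φ => ?_⟩
  refine le_csInf ⟨_, fun _ => ⟨0, hw⟩, rfl⟩ ?_
  rintro c ⟨a, rfl⟩
  exact card_filter_sup_lt_le_placementBlocking σ b φ a

/-- For every order `φ` and every (capacity-unrestricted) placement `a`,
the number of blocking blocks is at least `#{i : b i > max_j σ j}`; consequently
`G^T ≥ G^Z` (the per-iteration inequality showing that LB4 dominates LB3). -/
theorem GT_ge_GZ {w m : ℕ} (hw : 0 < w) (σ : Fin w → ℕ)
    (b : Fin m → ℕ) (hb : StrictAnti b) :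
    (∀ (φ : Equiv.Perm (Fin m)) (a : Fin m → Fin w),
        (Finset.univ.filter fun i : Fin m => Finset.univ.sup σ < b i).card ≤
          placementBlocking b σ φ a) ∧
      ∀ φ : Equiv.Perm (Fin m),
        (Finset.univ.filter fun i : Fin m => Finset.univ.sup σ < b i).card ≤
          sInf {c : ℕ | ∃ a : Fin m → Fin w, c = placementBlocking b σ φ a} :=
  GT_ge_GZ_general hw σ b
end

section
/- For every permutation φ of {1,…,m} and every capacity-feasible placement a with order φ, the number of blocking blocks of the placement is at least the minimum of C(f) over capacity-feasible assignments f. Consequently G*(M,B,φ) ≥ G^B, where G*(M,B,φ) is the minimum number of blocking blocks over capacity-feasible placements with order φ and G^B is the optimum of the unordered capacity-feasible assignment problem; i.e., GMBIP^B is a relaxation of GMBIP. -/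
lemma exists_feasible {w : ℕ} (δ : Fin w → ℕ) :
    ∀ m : ℕ, m ≤ ∑ j, δ j → ∃ f : Fin m → Fin w, Feasible δ f := by
  intro m
  induction m with
  | zero =>
    intro _
    refine ⟨Fin.elim0, fun j => ?_⟩
    simp
  | succ n ih =>
    intro h
    obtain ⟨f, hf⟩ := ih (Nat.le_of_succ_le h)
    have hsum : ∑ j, (Finset.univ.filter fun i => f i = j).card = n := by
      rw [← Finset.card_eq_sum_card_fiberwise (fun x _ => Finset.mem_univ (f x))]
      simp
    have : ∃ j0, (Finset.univ.filter fun i => f i = j0).card < δ j0 := by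
      by_contra hc
      push_neg at hc
      have := Finset.sum_le_sum (fun j (_ : j ∈ Finset.univ) => hc j)
      omega
    obtain ⟨j0, hj0⟩ := this
    refine ⟨(Fin.snoc f j0 : Fin (n+1) → Fin w), fun j => ?_⟩
    have hcard : (Finset.univ.filter fun i => (Fin.snoc f j0 : Fin (n+1) → Fin w) i = j).card =
        (Finset.univ.filter fun i => f i = j).card + (if j0 = j then 1 else 0) := by
      rw [Finset.card_filter, Finset.card_filter, Fin.sum_univ_castSucc]
      simp
    rw [hcard]
    by_cases hj : j0 = j
    · subst hj; simpa using hj0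
    · simp [hj]
      exact hf j

open Classical in
lemma key {w m : ℕ} (σ δ : Fin w → ℕ) (b : Fin m → ℕ)
    (φ : Equiv.Perm (Fin m)) (a : Fin m → Fin w) (ha : Feasible δ a) :
    sInf {c : ℕ | ∃ f : Fin m → Fin w, Feasible δ f ∧ c = totalCost b σ f} ≤
      placementBlocking b σ φ a := by
  set f : Fin m → Fin w := fun k => a (φ.symm k) with hfdef
  have hfeas : Feasible δ f := by
    intro j
    have hmap : (Finset.univ.filter fun k => f k = j) =
        (Finset.univ.filter fun i => a i = j).map φ.toEmbedding := by
      ext k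
      simp only [Finset.mem_filter, Finset.mem_map, Finset.mem_univ, true_and,
        Equiv.coe_toEmbedding, hfdef]
      constructor
      · intro h; exact ⟨φ.symm k, h, by simp⟩
      · rintro ⟨i, hi, rfl⟩; simpa using hi
    rw [hmap, Finset.card_map]
    exact ha j
  have hmem : totalCost b σ f ∈
      {c : ℕ | ∃ f : Fin m → Fin w, Feasible δ f ∧ c = totalCost b σ f} :=
    ⟨f, hfeas, rfl⟩
  refine le_trans (Nat.sInf_le hmem) ?_
  have heq : totalCost b σ f = ∑ i, blkCost (b (φ i)) (σ (a i)) := by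
    rw [totalCost, ← Equiv.sum_comp φ (fun k => blkCost (b k) (σ (f k)))]
    simp [hfdef]
  rw [heq, placementBlocking, Finset.card_filter]
  refine Finset.sum_le_sum fun i _ => ?_
  by_cases h : σ (a i) < b (φ i)
  · simp [blkCost, h]
  · simp [blkCost, h]

/-- For every order `φ`, every capacity-feasible placement has at least as
many blocking blocks as the optimum `G^B` of the unordered capacity-feasible assignment
problem; consequently `G*(M,B,φ) ≥ G^B`, i.e. GMBIP^B is a relaxation of GMBIP. -/
theorem Gstar_ge_GB {w m : ℕ} (hw : 0 < w) (σ δ : Fin w → ℕ)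
    (b : Fin m → ℕ) (hb : StrictAnti b) (hcap : m ≤ ∑ j, δ j) :
    (∀ (φ : Equiv.Perm (Fin m)) (a : Fin m → Fin w), Feasible δ a →
        sInf {c : ℕ | ∃ f : Fin m → Fin w, Feasible δ f ∧ c = totalCost b σ f} ≤
          placementBlocking b σ φ a) ∧
      ∀ φ : Equiv.Perm (Fin m),
        sInf {c : ℕ | ∃ f : Fin m → Fin w, Feasible δ f ∧ c = totalCost b σ f} ≤
          sInf {c : ℕ | ∃ a : Fin m → Fin w,
            Feasible δ a ∧ c = placementBlocking b σ φ a} := by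
  refine ⟨fun φ a ha => key σ δ b φ a ha, fun φ => ?_⟩
  obtain ⟨a0, ha0⟩ := exists_feasible δ m hcap
  have hne : {c : ℕ | ∃ a : Fin m → Fin w,
      Feasible δ a ∧ c = placementBlocking b σ φ a}.Nonempty :=
    ⟨placementBlocking b σ φ a0, a0, ha0, rfl⟩
  obtain ⟨a, ha, hEq⟩ := Nat.sInf_mem hne
  rw [hEq]
  exact key σ δ b φ a ha
end

section
/- There exist a number of stacks w ≥ 1, capacities δ_j ∈ ℕ, values σ_j ∈ ℕ, pairwise distinct blocks b_1 > ⋯ > b_m with Σ_j δ_j ≥ m, and a permutation φ of {1,…,m}, such that G^T < G^B, where G^T is the minimum number of blocking blocks over all placements with order φ ignoring the capacities, and G^B is the minimum of C(f) over capacity-feasible assignments f. (Hence the lower bound LB4 does not dominate the Unordered Blocks Assignment Lower Bound.) -/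
/-- There is an instance (stacks with capacities `δ` and values `σ`,
strictly decreasing blocks `b` with `∑ j, δ j ≥ m`, and an order `φ`) on which
`G^T < G^B`: the capacity-ignoring ordered optimum is strictly below the unordered
capacity-feasible optimum.  Hence LB4 does not dominate the Unordered Blocks Assignment
Lower Bound. -/
theorem exists_GT_lt_GB :
    ∃ (w m : ℕ) (_ : 0 < w) (δ σ : Fin w → ℕ) (b : Fin m → ℕ),
      StrictAnti b ∧ m ≤ ∑ j, δ j ∧
        ∃ φ : Equiv.Perm (Fin m),
          sInf {c : ℕ | ∃ a : Fin m → Fin w, c = placementBlocking b σ φ a} <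
            sInf {c : ℕ | ∃ f : Fin m → Fin w,
              Feasible δ f ∧ c = totalCost b σ f} := by
  refine ⟨2, 2, by norm_num, ![1, 1], ![5, 0], ![2, 1], by decide, by decide,
    Equiv.refl _, ?_⟩
  have h0 : placementBlocking ![2, 1] ![5, 0] (Equiv.refl _) (fun _ => 0) = 0 := by
    unfold placementBlocking
    rw [Finset.card_eq_zero, Finset.filter_eq_empty_iff]
    intro i _
    push_neg
    refine ⟨by fin_cases i <;> simp, ?_⟩
    intro i' hi' _
    fin_cases i <;> fin_cases i' <;> simp_all
  have hL : sInf {c : ℕ | ∃ a : Fin 2 → Fin 2,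
      c = placementBlocking ![2, 1] ![5, 0] (Equiv.refl _) a} = 0 :=
    Nat.sInf_eq_zero.mpr (Or.inl ⟨fun _ => 0, h0.symm⟩)
  have hge : ∀ f : Fin 2 → Fin 2, Feasible ![1, 1] f →
      1 ≤ totalCost ![2, 1] ![5, 0] f := by unfold Feasible totalCost blkCost; decide
  have hne : {c : ℕ | ∃ f : Fin 2 → Fin 2,
      Feasible ![1, 1] f ∧ c = totalCost ![2, 1] ![5, 0] f}.Nonempty :=
    ⟨totalCost ![2, 1] ![5, 0] id, id, by unfold Feasible; decide, rfl⟩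
  obtain ⟨f, hf, hc⟩ := Nat.sInf_mem hne
  rw [hL, hc]
  exact hge f hf
end

section
/- There exist a number of stacks w ≥ 1, capacities δ_j ∈ ℕ, values σ_j ∈ ℕ, pairwise distinct blocks b_1 > ⋯ > b_m with Σ_j δ_j ≥ m, and a permutation φ of {1,…,m}, such that G^B < G^T, where G^T is the minimum number of blocking blocks over all placements with order φ ignoring the capacities, and G^B is the minimum of C(f) over capacity-feasible assignments f. (Hence the Unordered Blocks Assignment Lower Bound does not dominate the lower bound LB4.) -/
/-- There is an instance (stacks with capacities `δ` and values `σ`,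
strictly decreasing blocks `b` with `∑ j, δ j ≥ m`, and an order `φ`) on which
`G^B < G^T`: the unordered capacity-feasible optimum is strictly below the
capacity-ignoring ordered optimum.  Hence the Unordered Blocks Assignment Lower Bound
does not dominate LB4. -/
theorem exists_GB_lt_GT :
    ∃ (w m : ℕ) (_ : 0 < w) (δ σ : Fin w → ℕ) (b : Fin m → ℕ),
      StrictAnti b ∧ m ≤ ∑ j, δ j ∧
        ∃ φ : Equiv.Perm (Fin m),
          sInf {c : ℕ | ∃ f : Fin m → Fin w,
              Feasible δ f ∧ c = totalCost b σ f} <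
            sInf {c : ℕ | ∃ a : Fin m → Fin w, c = placementBlocking b σ φ a} := by
  refine ⟨1, 2, one_pos, (fun _ => 2), (fun _ => 2), ![2, 1], ?_, ?_, Equiv.swap 0 1, ?_⟩
  · intro i j hij
    fin_cases i <;> fin_cases j <;> simp_all
  · simp
  · have hL : sInf {c : ℕ | ∃ f : Fin 2 → Fin 1,
        Feasible (fun _ => 2) f ∧ c = totalCost ![2,1] (fun _ => 2) f} = 0 := by
      apply Nat.sInf_eq_zero.mpr
      left
      refine ⟨fun _ => 0, ?_, ?_⟩
      · intro j
        exact le_trans (Finset.card_filter_le _ _) (by simp)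
      · decide
    rw [hL]
    have key : ∀ a : Fin 2 → Fin 1, placementBlocking ![2,1] (fun _ => 2) (Equiv.swap 0 1) a = 1 := by
      intro a
      rw [placementBlocking]
      have : (Finset.univ.filter fun i : Fin 2 =>
          (fun _ => (2:ℕ)) (a i) < ![2,1] ((Equiv.swap 0 1) i) ∨
          ∃ i', i' < i ∧ a i' = a i ∧ ![2,1] ((Equiv.swap 0 1) i') < ![2,1] ((Equiv.swap 0 1) i)) = {1} := by
        ext i
        fin_cases i <;>
          simp [Equiv.swap_apply_def, Subsingleton.elim (a 0) (a 1)]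
      rw [this, Finset.card_singleton]
    have hne : {c : ℕ | ∃ a : Fin 2 → Fin 1, c = placementBlocking ![2,1] (fun _ => 2) (Equiv.swap 0 1) a} = {1} := by
      ext c
      constructor
      · rintro ⟨a, rfl⟩; exact key a
      · rintro rfl; exact ⟨fun _ => 0, (key _).symm⟩
    rw [hne]
    simp
end

section
/- For every initial yard and every feasible solution of the Block Relocation Problem, the number of reshuffle moves in the solution is at least the number of blocking blocks of the initial yard. (Validity of the lower bound LB1.) -/
/-- A state of the yard: each of the `w` stacks is a list of blocks, **ordered from top to
bottom** (the head of the list is the topmost block of the stack). -/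
abbrev YState (w : ℕ) := Fin w → List ℕ

/-- A move of the Block Relocation Problem: either a reshuffle from stack `src` to stack
`dst`, or the retrieval of the topmost block of stack `src`. -/
inductive BMove (w : ℕ) : Type
  | reshuffle (src dst : Fin w) : BMove w
  | retrieval (src : Fin w) : BMove w

/-- Whether a move is a reshuffle. -/
def BMove.isReshuffle {w : ℕ} : BMove w → Bool
  | .reshuffle _ _ => true
  | .retrieval _ => false

/-- Transition relation of the (unrestricted) BRP with stacks of height `h`:
a reshuffle moves the topmost block of a non-empty stack `src` on top of a different stack
`dst` of current height `< h`; a retrieval removes the topmost block of `src`, provided it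
is the minimum block still present in the yard. -/
inductive BStep {w : ℕ} (h : ℕ) : YState w → BMove w → YState w → Prop
  | reshuffle {S : YState w} (src dst : Fin w) (x : ℕ) (t : List ℕ)
      (hsrc : S src = x :: t) (hne : src ≠ dst) (hcap : (S dst).length < h) :
      BStep h S (.reshuffle src dst)
        (Function.update (Function.update S src t) dst (x :: S dst))
  | retrieval {S : YState w} (src : Fin w) (r : ℕ) (t : List ℕ)
      (hsrc : S src = r :: t) (hmin : ∀ j, ∀ y ∈ S j, r ≤ y) :
      BStep h S (.retrieval src) (Function.update S src t)

/-- Transition relation of the **restricted** BRP: as `BStep`, but a reshuffle is allowed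
only for a block lying, in its stack, above the minimum block `r` still present in the
yard. -/
inductive RStep {w : ℕ} (h : ℕ) : YState w → BMove w → YState w → Prop
  | reshuffle {S : YState w} (src dst : Fin w) (x : ℕ) (t : List ℕ) (r : ℕ)
      (hsrc : S src = x :: t) (hne : src ≠ dst) (hcap : (S dst).length < h)
      (hr : r ∈ t) (hmin : ∀ j, ∀ y ∈ S j, r ≤ y) :
      RStep h S (.reshuffle src dst)
        (Function.update (Function.update S src t) dst (x :: S dst))
  | retrieval {S : YState w} (src : Fin w) (r : ℕ) (t : List ℕ)
      (hsrc : S src = r :: t) (hmin : ∀ j, ∀ y ∈ S j, r ≤ y) :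
      RStep h S (.retrieval src) (Function.update S src t)

/-- `S` is a yard with stacks of height `h` on the blocks `{1, …, n}`: every stack has at
most `h` blocks, and every block `1, …, n` (and no other) occurs exactly once. -/
def IsYard {w : ℕ} (h n : ℕ) (S : YState w) : Prop :=
  (∀ j, (S j).length ≤ h) ∧
    ∀ x : ℕ, (∑ j, (S j).count x) = if x ∈ Finset.Icc 1 n then 1 else 0

open Classical in
/-- Number of blocking blocks of a stack (list ordered top to bottom): positions below
which some smaller block lies. -/
noncomputable def stackBlocking (L : List ℕ) : ℕ :=
  (Finset.univ.filter fun p : Fin L.length =>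
    ∃ q : Fin L.length, p < q ∧ L.get q < L.get p).card

/-- Number of blocking blocks of the yard. -/
noncomputable def yardBlocking {w : ℕ} (S : YState w) : ℕ := ∑ j, stackBlocking (S j)


lemma stackBlocking_nil : stackBlocking [] = 0 := by
  simp [stackBlocking]

lemma stackBlocking_cons (x : ℕ) (t : List ℕ) :
    stackBlocking (x :: t) = (if ∃ y ∈ t, y < x then 1 else 0) + stackBlocking t := by
  classical
  unfold stackBlocking
  rw [Finset.card_filter, Finset.card_filter]
  simp only [List.length_cons, List.get_eq_getElem]
  rw [Fin.sum_univ_succ]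
  congr 1
  · have h0 : (∃ q : Fin (t.length + 1), (0 : Fin (t.length + 1)) < q ∧
        (x :: t)[(q : ℕ)] < (x :: t)[((0 : Fin (t.length + 1)) : ℕ)]) ↔ ∃ y ∈ t, y < x := by
      constructor
      · rintro ⟨⟨_ | j, hj⟩, hq, hlt⟩
        · exact absurd hq (lt_irrefl _)
        · refine ⟨t[j], List.getElem_mem _, ?_⟩
          simpa using hlt
      · rintro ⟨y, hy, hlt⟩
        rcases List.mem_iff_getElem.1 hy with ⟨j, hj, rfl⟩
        exact ⟨(⟨j, hj⟩ : Fin t.length).succ, Fin.succ_pos _, by simpa using hlt⟩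
    rw [if_congr h0 rfl rfl]
  · apply Finset.sum_congr rfl
    intro i _
    have hi : (∃ q : Fin (t.length + 1), i.succ < q ∧
        (x :: t)[(q : ℕ)] < (x :: t)[((i.succ : Fin (t.length + 1)) : ℕ)]) ↔
        ∃ q : Fin t.length, i < q ∧ t[(q : ℕ)] < t[(i : ℕ)] := by
      constructor
      · rintro ⟨⟨_ | j, hj⟩, hq, hlt⟩
        · exact absurd hq (by simp [Fin.lt_def])
        · refine ⟨⟨j, Nat.lt_of_succ_lt_succ hj⟩, ?_, by simpa using hlt⟩
          simpa [Fin.lt_def] using hq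
      · rintro ⟨q, hq, hlt⟩
        exact ⟨q.succ, Fin.succ_lt_succ_iff.2 hq, by simpa using hlt⟩
    rw [if_congr hi rfl rfl]

lemma yard_update {w : ℕ} (S : YState w) (i : Fin w) (L : List ℕ) :
    yardBlocking (Function.update S i L) + stackBlocking (S i)
      = stackBlocking L + yardBlocking S := by
  classical
  unfold yardBlocking
  have h1 : ∀ j, stackBlocking (Function.update S i L j)
      = Function.update (fun j => stackBlocking (S j)) i (stackBlocking L) j := by
    intro j
    by_cases hj : j = i
    · subst hj; simp
    · rw [Function.update_of_ne hj, Function.update_of_ne hj]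
  simp only [h1]
  rw [Finset.sum_update_of_mem (Finset.mem_univ i),
    ← Finset.add_sum_erase _ _ (Finset.mem_univ i), Finset.erase_eq]
  ring

lemma step_blocking {w h : ℕ} {S S' : YState w} {m : BMove w} (hs : BStep h S m S') :
    yardBlocking S ≤ yardBlocking S' + (if m.isReshuffle then 1 else 0) := by
  classical
  cases hs with
  | reshuffle src dst x t hsrc hne hcap =>
    have h1 := yard_update S src t
    have h2 := yard_update (Function.update S src t) dst (x :: S dst)
    rw [Function.update_of_ne (Ne.symm hne)] at h2
    rw [hsrc, stackBlocking_cons] at h1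
    rw [stackBlocking_cons] at h2
    simp only [BMove.isReshuffle, if_true]
    set a := (if ∃ y ∈ t, y < x then 1 else 0) with ha
    have ha1 : a ≤ 1 := by rw [ha]; split <;> omega
    set b := (if ∃ y ∈ S dst, y < x then 1 else 0) with hb
    omega
  | retrieval src r t hsrc hmin =>
    have h1 := yard_update S src t
    rw [hsrc, stackBlocking_cons] at h1
    have hfalse : ¬ ∃ y ∈ t, y < r := by
      rintro ⟨y, hy, hlt⟩
      exact absurd (hmin src y (by rw [hsrc]; exact List.mem_cons_of_mem _ hy)) (by omega)
    rw [if_neg hfalse] at h1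
    simp only [BMove.isReshuffle, if_false, Bool.false_eq_true]
    omega

/-- (Validity of LB1.)  In every feasible solution of the BRP — a
sequence of states `S 0, S 1, …, S K` connected by legal moves and ending in the empty
yard — the number of reshuffle moves is at least the number of blocking blocks of the
initial yard. -/
theorem lb1_valid {w h n K : ℕ} (S : ℕ → YState w) (mv : ℕ → BMove w)
    (hyard : IsYard h n (S 0))
    (hstep : ∀ t < K, BStep h (S t) (mv t) (S (t + 1)))
    (hend : ∀ j, S K j = []) :
    yardBlocking (S 0) ≤ ((List.range K).filter fun t => (mv t).isReshuffle).length := by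
  classical
  have key : ∀ k ≤ K, yardBlocking (S 0) ≤ yardBlocking (S k) +
      ((List.range k).filter fun t => (mv t).isReshuffle).length := by
    intro k hk
    induction k with
    | zero => simp
    | succ k ih =>
      have ih' := ih (by omega)
      have hb := step_blocking (hstep k (by omega))
      rw [List.range_succ, List.filter_append, List.length_append]
      cases hmv : (mv k).isReshuffle <;> simp [hmv] at hb ⊢ <;> omega
  have hK : yardBlocking (S K) = 0 := by
    simp [yardBlocking, hend, stackBlocking_nil]
  have := key K le_rfl
  omega
end

section
/- In the restricted Block Relocation Problem, for every initial yard and every feasible solution, the total number of reshuffle moves equals Σ_{i=1}^n a_i, where a_i is the number of blocks located above block i in its stack at the first moment at which i is the minimum block present in the yard. -/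
/-- Block `i` is the minimum block still present in the yard `S`. -/
def MinPresent {w : ℕ} (S : YState w) (i : ℕ) : Prop :=
  (∃ j, i ∈ S j) ∧ ∀ j, ∀ y ∈ S j, i ≤ y

/-- The number of blocks located above block `i` in its stack (stacks are listed from top
to bottom, so this is the position of `i` in its stack's list). -/
def numAbove {w : ℕ} (S : YState w) (i : ℕ) : ℕ :=
  ∑ j, if i ∈ S j then ((S j).takeWhile fun y => y != i).length else 0

/-!
While block `m` is the minimum still present, the restricted rule forces every reshuffle to
take the topmost block of the stack holding `m`, so each reshuffle lowers the number of blocks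
above `m` by exactly one and the retrieval of `m` happens when that number is zero. Since the
yard always holds exactly the blocks `m, …, n`, block `m + 1` becomes the minimum right after
`m` is retrieved, and at that moment it has `a (m + 1)` blocks above it. Backward induction on
time then shows that the reshuffles still to come number the blocks above the current minimum
plus the `a i` of the larger blocks.
-/

open Finset

namespace YState

variable {w : ℕ}

def blocks (S : YState w) : Multiset ℕ := ∑ j, (S j : Multiset ℕ)

lemma mem_blocks {S : YState w} {x : ℕ} : x ∈ S.blocks ↔ ∃ j, x ∈ S j := by
  simp [blocks, Multiset.mem_sum]

lemma blocks_eq_of_count {S : YState w} {s : Finset ℕ}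
    (hS : ∀ x, (∑ j, (S j).count x) = if x ∈ s then 1 else 0) : S.blocks = s.val := by
  ext x
  simp only [blocks, Multiset.count_sum', Multiset.coe_count, hS,
    Multiset.count_eq_of_nodup s.nodup, Finset.mem_val]

lemma blocks_update_add (S : YState w) (a : Fin w) (l : List ℕ) :
    blocks (Function.update S a l) + S a = S.blocks + l := by
  simp only [blocks]
  rw [← add_sum_erase _ _ (mem_univ a), ← add_sum_erase _ _ (mem_univ a),
    sum_congr rfl fun j hj => by rw [Function.update_of_ne (ne_of_mem_erase hj)],
    Function.update_self]
  abel

lemma cons_blocks_remove {S : YState w} {src : Fin w} {x : ℕ}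
    {t : List ℕ} (hsrc : S src = x :: t) :
    x ::ₘ blocks (Function.update S src t) = S.blocks := by
  have h := blocks_update_add S src t
  rw [hsrc, ← Multiset.cons_coe, Multiset.add_cons, ← Multiset.cons_add] at h
  exact add_right_cancel h

lemma blocks_move {S : YState w} {src dst : Fin w} {x : ℕ}
    {t : List ℕ} (hsrc : S src = x :: t) (hne : src ≠ dst) :
    blocks (Function.update (Function.update S src t) dst (x :: S dst)) = S.blocks := by
  have h := blocks_update_add (Function.update S src t) dst (x :: S dst)
  rw [Function.update_of_ne hne.symm, ← Multiset.cons_coe, Multiset.add_cons,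
    ← Multiset.cons_add, cons_blocks_remove hsrc] at h
  exact add_right_cancel h

variable {S : YState w}

lemma eq_of_mem_of_mem (hS : S.blocks.Nodup) {x : ℕ} {a b : Fin w} (ha : x ∈ S a)
    (hb : x ∈ S b) : a = b := by
  classical
  by_contra hab
  have hle : (S a : Multiset ℕ) + S b ≤ S.blocks :=
    calc (S a : Multiset ℕ) + S b = ∑ j ∈ {a, b}, (S j : Multiset ℕ) :=
          (sum_pair (f := fun j => (S j : Multiset ℕ)) hab).symm
      _ ≤ S.blocks := sum_le_sum_of_subset (subset_univ _)
  exact Multiset.disjoint_left.mp (Multiset.nodup_add.mp (Multiset.nodup_of_le hle hS)).2.2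
    (Multiset.mem_coe.mpr ha) (Multiset.mem_coe.mpr hb)

lemma nodup_of_nodup_blocks (hS : S.blocks.Nodup) (j : Fin w) : (S j).Nodup := by
  have hle : (S j : Multiset ℕ) ≤ S.blocks := by
    simpa [blocks] using sum_le_sum_of_subset (f := fun j => (S j : Multiset ℕ)) (subset_univ {j})
  exact Multiset.coe_nodup.mp (Multiset.nodup_of_le hle hS)

end YState

open YState

section NumAbove

variable {w : ℕ} {S : YState w} {i : ℕ}

lemma numAbove_eq_of_mem (hS : S.blocks.Nodup) {j : Fin w} (hi : i ∈ S j) :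
    numAbove S i = ((S j).takeWhile fun y => y != i).length := by
  rw [numAbove, sum_eq_single j (fun b _ hb => if_neg fun hib => hb (eq_of_mem_of_mem hS hib hi))
    (by simp), if_pos hi]

lemma numAbove_eq_zero_of_notMem (hi : i ∉ S.blocks) : numAbove S i = 0 :=
  sum_eq_zero fun j _ => if_neg fun hij => hi (mem_blocks.mpr ⟨j, hij⟩)

lemma numAbove_eq_zero_of_top (hS : S.blocks.Nodup) {src : Fin w} {t : List ℕ}
    (hsrc : S src = i :: t) : numAbove S i = 0 := by
  rw [numAbove_eq_of_mem hS (hsrc ▸ List.mem_cons_self), hsrc]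
  simp

end NumAbove

section Yard

variable {w h m n : ℕ} {S S' : YState w}

lemma minPresent_of_blocks_eq (hc : S.blocks = (Icc m n).val) (hmn : m ≤ n) :
    MinPresent S m := by
  refine ⟨mem_blocks.mp ?_, fun j y hy => ?_⟩
  · simp [hc, hmn]
  · have hy : y ∈ S.blocks := mem_blocks.mpr ⟨j, hy⟩
    simp only [hc, Finset.mem_val, Finset.mem_Icc] at hy
    exact hy.1

lemma eq_of_forall_le (hc : S.blocks = (Icc m n).val) {r : ℕ} {j : Fin w} (hr : r ∈ S j)
    (hmin : ∀ j, ∀ y ∈ S j, r ≤ y) : r = m := by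
  have hr : r ∈ S.blocks := mem_blocks.mpr ⟨j, hr⟩
  simp only [hc, Finset.mem_val, Finset.mem_Icc] at hr
  obtain ⟨j', hm⟩ := (minPresent_of_blocks_eq hc (hr.1.trans hr.2)).1
  exact le_antisymm (hmin j' m hm) hr.1

lemma RStep.blocks_le {mv : BMove w} (hs : RStep h S mv S') : S'.blocks ≤ S.blocks := by
  cases hs with
  | reshuffle src dst x t r hsrc hne => exact (blocks_move hsrc hne).le
  | retrieval src r t hsrc => exact cons_blocks_remove hsrc ▸ Multiset.le_cons_self _ _

lemma RStep.of_isReshuffle {mv : BMove w} (hs : RStep h S mv S')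
    (hmv : mv.isReshuffle = true) (hc : S.blocks = (Icc m n).val) :
    S'.blocks = S.blocks ∧ numAbove S m = numAbove S' m + 1 := by
  cases hs with
  | retrieval => cases hmv
  | reshuffle src dst x t r hsrc hne _ hr hmin =>
    obtain rfl := eq_of_forall_le hc (hsrc ▸ List.mem_cons_of_mem x hr) hmin
    have hS : S.blocks.Nodup := hc ▸ (Icc r n).nodup
    have hxr : x ≠ r := fun hxr => (List.nodup_cons.mp (hsrc ▸ nodup_of_nodup_blocks hS src)).1
      (hxr ▸ hr)
    refine ⟨blocks_move hsrc hne, ?_⟩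
    rw [numAbove_eq_of_mem hS (hsrc ▸ List.mem_cons_of_mem x hr),
      numAbove_eq_of_mem ((blocks_move hsrc hne).symm ▸ hS)
        (j := src) (by rwa [Function.update_of_ne hne, Function.update_self]),
      Function.update_of_ne hne, Function.update_self, hsrc, List.takeWhile_cons,
      if_pos (bne_iff_ne.mpr hxr), List.length_cons]

lemma RStep.of_isReshuffle_eq_false {mv : BMove w} (hs : RStep h S mv S')
    (hmv : mv.isReshuffle = false) (hc : S.blocks = (Icc m n).val) :
    m ∈ S.blocks ∧ S'.blocks = (Icc (m + 1) n).val ∧ numAbove S m = 0 := by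
  cases hs with
  | reshuffle => cases hmv
  | retrieval src r t hsrc hmin =>
    obtain rfl := eq_of_forall_le hc (hsrc ▸ List.mem_cons_self) hmin
    have hblocks := cons_blocks_remove hsrc
    have hrn : r ≤ n := by
      have hr : r ∈ S.blocks := mem_blocks.mpr ⟨src, hsrc ▸ List.mem_cons_self⟩
      simp only [hc, Finset.mem_val, Finset.mem_Icc] at hr
      exact hr.2
    rw [hc, Icc_eq_cons_Ioc hrn, Finset.cons_val, Multiset.cons_inj_right] at hblocks
    exact ⟨by simp [hc, hrn], by rw [hblocks, Icc_add_one_left_eq_Ioc],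
      numAbove_eq_zero_of_top (hc ▸ (Icc r n).nodup) hsrc⟩

end Yard

section Solution

variable {w h n K : ℕ} {S : ℕ → YState w} {mv : ℕ → BMove w} {τ : ℕ → ℕ}

def reshuffleCount (mv : ℕ → BMove w) (t K : ℕ) : ℕ :=
  ((List.range' t (K - t)).filter fun s => (mv s).isReshuffle).length

lemma reshuffleCount_self : reshuffleCount mv K K = 0 := by
  simp [reshuffleCount]

lemma reshuffleCount_of_lt {t : ℕ} (ht : t < K) :
    reshuffleCount mv t K = reshuffleCount mv (t + 1) K + if (mv t).isReshuffle then 1 else 0 := by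
  rw [reshuffleCount, show K - t = K - (t + 1) + 1 by omega, List.range'_succ, List.filter_cons]
  split <;> simp [reshuffleCount, *]

lemma blocks_le_of_le (hstep : ∀ t < K, RStep h (S t) (mv t) (S (t + 1))) {s t : ℕ}
    (hst : s ≤ t) (ht : t ≤ K) : (S t).blocks ≤ (S s).blocks := by
  induction t, hst using Nat.le_induction with
  | base => exact le_rfl
  | succ t _ ih => exact (hstep t ht).blocks_le.trans (ih (by omega))

lemma numAbove_add_sum_Ioc_eq_sum_Icc
    (hτ : ∀ i ∈ Icc 1 n, MinPresent (S (τ i)) i ∧ ∀ t < τ i, ¬ MinPresent (S t) i)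
    {t m : ℕ} (hc : (S t).blocks = (Icc m n).val) (hm : 1 ≤ m)
    (hfirst : ∀ t' < t, ¬ MinPresent (S t') m) :
    numAbove (S t) m + ∑ i ∈ Ioc m n, numAbove (S (τ i)) i =
      ∑ i ∈ Icc m n, numAbove (S (τ i)) i := by
  rcases le_or_gt m n with hmn | hnm
  · obtain ⟨hmin, hbefore⟩ := hτ m (mem_Icc.mpr ⟨hm, hmn⟩)
    have hτm : τ m = t := le_antisymm
      (not_lt.mp fun h => hbefore _ h (minPresent_of_blocks_eq hc hmn))
      (not_lt.mp fun h => hfirst _ h hmin)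
    rw [Icc_eq_cons_Ioc hmn, sum_cons, hτm]
  · rw [numAbove_eq_zero_of_notMem (by simp [hc, hnm]), Ioc_eq_empty (by omega),
      Icc_eq_empty (by omega)]
    simp

lemma reshuffleCount_eq (hstep : ∀ t < K, RStep h (S t) (mv t) (S (t + 1)))
    (hend : ∀ j, S K j = [])
    (hτ : ∀ i ∈ Icc 1 n, MinPresent (S (τ i)) i ∧ ∀ t < τ i, ¬ MinPresent (S t) i)
    {t m : ℕ} (ht : t ≤ K) (hc : (S t).blocks = (Icc m n).val) :
    reshuffleCount mv t K = numAbove (S t) m + ∑ i ∈ Ioc m n, numAbove (S (τ i)) i := by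
  induction ht using Nat.decreasingInduction generalizing m with
  | self =>
    have hempty : (S K).blocks = 0 := by simp [blocks, hend]
    have hnm : n < m := by
      by_contra! hmn
      simpa [hc, hmn] using congrArg (m ∈ ·) hempty
    rw [reshuffleCount_self, numAbove_eq_zero_of_notMem (by simp [hempty]),
      Ioc_eq_empty (by omega), sum_empty, add_zero]
  | of_succ t ht ih =>
    rw [reshuffleCount_of_lt ht]
    cases hmv : (mv t).isReshuffle
    · obtain ⟨hmem, hc', hnum⟩ := (hstep t ht).of_isReshuffle_eq_false hmv hc
      have hfirst : ∀ t' < t + 1, ¬ MinPresent (S t') (m + 1) := fun t' ht' hmp => by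
        obtain ⟨j, hj⟩ := mem_blocks.mp
          (Multiset.mem_of_le (blocks_le_of_le hstep (s := t') (by omega) ht.le) hmem)
        exact absurd (hmp.2 j m hj) (by omega)
      rw [ih hc', numAbove_add_sum_Ioc_eq_sum_Icc hτ hc' (by omega) hfirst,
        Icc_add_one_left_eq_Ioc, hnum]
      simp
    · obtain ⟨hc', hnum⟩ := (hstep t ht).of_isReshuffle hmv hc
      rw [ih (hc' ▸ hc), hnum]
      simp only [if_true]
      omega

end Solution

/-- In the restricted BRP, for every feasible solution (a sequence of
states `S 0, …, S K` connected by legal restricted moves and ending in the empty yard),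
the total number of reshuffles equals `∑ i, a i`, where `a i` is the number of blocks above
block `i` at the first time `τ i` at which `i` is the minimum block present. -/
theorem restricted_reshuffles_eq {w h n K : ℕ} (S : ℕ → YState w) (mv : ℕ → BMove w)
    (τ : ℕ → ℕ)
    (hyard : IsYard h n (S 0))
    (hstep : ∀ t < K, RStep h (S t) (mv t) (S (t + 1)))
    (hend : ∀ j, S K j = [])
    (hτ : ∀ i ∈ Finset.Icc 1 n,
      τ i ≤ K ∧ MinPresent (S (τ i)) i ∧ ∀ t < τ i, ¬ MinPresent (S t) i) :
    ((List.range K).filter fun t => (mv t).isReshuffle).length =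
      ∑ i ∈ Finset.Icc 1 n, numAbove (S (τ i)) i := by
  have hτ' : ∀ i ∈ Icc 1 n, MinPresent (S (τ i)) i ∧ ∀ t < τ i, ¬ MinPresent (S t) i :=
    fun i hi => (hτ i hi).2
  have hc : (S 0).blocks = (Icc 1 n).val := blocks_eq_of_count hyard.2
  calc ((List.range K).filter fun t => (mv t).isReshuffle).length
      = reshuffleCount mv 0 K := by rw [reshuffleCount, List.range_eq_range', Nat.sub_zero]
    _ = numAbove (S 0) 1 + ∑ i ∈ Ioc 1 n, numAbove (S (τ i)) i :=
      reshuffleCount_eq hstep hend hτ' K.zero_le hc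
    _ = ∑ i ∈ Icc 1 n, numAbove (S (τ i)) i :=
      numAbove_add_sum_Ioc_eq_sum_Icc hτ' hc le_rfl fun _ h => absurd h (Nat.not_lt_zero _)
end

section
/- Let M = M^0 be a yard with w stacks of height h containing blocks 1,…,n, and for i = 1,…,n define: if block i is present in M^{i−1}, let t_i be its stack and B_i the set of blocks located above i in stack t_i, and let M^i be obtained from M^{i−1} by removing block i and all blocks of B_i; if block i is not present in M^{i−1}, set B_i = ∅ and M^i = M^{i−1}. Let M̃^i be M^i with stack t_i deleted. For a yard Ỹ and a finite block set B, with σ_j the minimum block of stack j of Ỹ (a value larger than every block for an empty stack) and δ_j = h minus the height of stack j, define G^Z(Ỹ,B) = #{ x ∈ B : x > max_j σ_j } and G^B(Ỹ,B) as the minimum over capacity-feasible maps f : B → stacks of Ỹ (#{x : f(x)=j} ≤ δ_j for all j) of #{ x ∈ B : x > σ_{f(x)} }. Assume that for each i a capacity-feasible map of B_i into M̃^i exists. Then Σ_{i=1}^n (|B_i| + G^B(M̃^i, B_i)) ≥ Σ_{i=1}^n (|B_i| + G^Z(M̃^i, B_i)); that is, the Unordered Blocks Assignment Lower Bound dominates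 the lower bound LB3. -/
/-- The value `σ` of a stack: the minimum block of the list, or `n + 1` (a value larger
than every block index) for an empty stack. -/
def sigmaVal (n : ℕ) (L : List ℕ) : ℕ := L.foldr min (n + 1)

/-- The list of blocks located above block `i` in stack `j` of the yard `S`
(empty if `i` is not in stack `j`), listed from top to bottom. -/
def aboveList {w : ℕ} (S : YState w) (i : ℕ) (j : Fin w) : List ℕ :=
  if i ∈ S j then (S j).takeWhile (fun y => y != i) else []

/-- The set `B i`: blocks located above block `i` in the yard `S` (empty if `i` is not
present). -/
def aboveFinset {w : ℕ} (S : YState w) (i : ℕ) : Finset ℕ :=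
  Finset.univ.biUnion fun j => (aboveList S i j).toFinset

/-- Remove block `i` together with all blocks above it from the yard `S` (if `i` is not
present, nothing changes). -/
def peel {w : ℕ} (S : YState w) (i : ℕ) : YState w := fun j =>
  if i ∈ S j then (S j).drop (((S j).takeWhile fun y => y != i).length + 1) else S j

/-- `peelSeq S i` is the yard `M^i` of the paper: `M^0 = S` and `M^i` is obtained from
`M^(i-1)` by removing block `i` and all blocks above it. -/
def peelSeq {w : ℕ} (S : YState w) : ℕ → YState w
  | 0 => S
  | i + 1 => peel (peelSeq S i) (i + 1)

/-- `f` is a capacity-feasible map of the block set `B` into the stacks `A` of the yard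
`Y` (with height `h`): every block goes to a stack of `A`, and stack `j` receives at most
`h - (Y j).length` blocks. -/
def CapFeasibleOn {w : ℕ} (h : ℕ) (Y : YState w) (A : Finset (Fin w)) (B : Finset ℕ)
    (f : ℕ → Fin w) : Prop :=
  (∀ x ∈ B, f x ∈ A) ∧ ∀ j ∈ A, (B.filter fun x => f x = j).card ≤ h - (Y j).length

/-- `G^Z(Y, B)` over the stacks `A`: the number of blocks of `B` larger than the maximum
stack value. -/
def GZval {w : ℕ} (n : ℕ) (Y : YState w) (A : Finset (Fin w)) (B : Finset ℕ) : ℕ :=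
  (B.filter fun x => A.sup (fun j => sigmaVal n (Y j)) < x).card

/-- `G^B(Y, B)` over the stacks `A`: the minimum, over capacity-feasible maps `f` of `B`
into the stacks of `A`, of the number of blocks `x ∈ B` with `x > σ (f x)`. -/
noncomputable def GBval {w : ℕ} (h n : ℕ) (Y : YState w) (A : Finset (Fin w))
    (B : Finset ℕ) : ℕ :=
  sInf {c : ℕ | ∃ f : ℕ → Fin w, CapFeasibleOn h Y A B f ∧
    c = (B.filter fun x => sigmaVal n (Y (f x)) < x).card}

theorem Finset.card_filter_sup_lt_le {ι α : Type*} [LinearOrder α] [OrderBot α]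
    {A : Finset ι} {B : Finset α} (σ : ι → α) {g : α → ι} (hg : ∀ x ∈ B, g x ∈ A) :
    (B.filter fun x => A.sup σ < x).card ≤ (B.filter fun x => σ (g x) < x).card :=
  Finset.card_le_card fun x hx => by
    simp only [Finset.mem_filter] at hx ⊢
    exact ⟨hx.1, (Finset.le_sup (hg x hx.1)).trans_lt hx.2⟩

/-- Without a feasible map the infimum defining `GBval` is `sInf ∅ = 0`. -/
theorem GZval_le_GBval {w h n : ℕ} {Y : YState w} {A : Finset (Fin w)} {B : Finset ℕ}
    (hB : ∃ f, CapFeasibleOn h Y A B f) : GZval n Y A B ≤ GBval h n Y A B := by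
  obtain ⟨f, hf⟩ := hB
  refine le_csInf ⟨_, f, hf, rfl⟩ ?_
  rintro c ⟨g, hg, rfl⟩
  exact Finset.card_filter_sup_lt_le _ hg.1

theorem ubalb_dominates_lb3_general {w h n : ℕ} (S : YState w)
    (t : ℕ → Fin w)
    (hfeas : ∀ i ∈ Finset.Icc 1 n, ∃ f : ℕ → Fin w,
      CapFeasibleOn h (peelSeq S i) (Finset.univ.erase (t i))
        (aboveFinset (peelSeq S (i - 1)) i) f) :
    ∑ i ∈ Finset.Icc 1 n,
        ((aboveFinset (peelSeq S (i - 1)) i).card +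
          GZval n (peelSeq S i) (Finset.univ.erase (t i))
            (aboveFinset (peelSeq S (i - 1)) i)) ≤
      ∑ i ∈ Finset.Icc 1 n,
        ((aboveFinset (peelSeq S (i - 1)) i).card +
          GBval h n (peelSeq S i) (Finset.univ.erase (t i))
            (aboveFinset (peelSeq S (i - 1)) i)) :=
  Finset.sum_le_sum fun i hi => Nat.add_le_add_left (GZval_le_GBval (hfeas i hi)) _

/-- (The Unordered Blocks Assignment Lower Bound dominates LB3.)
Let `M^i = peelSeq S i` be the peeling sequence of the yard `S`, `B i` the blocks above
block `i` in `M^(i-1)`, `t i` the stack of block `i` in `M^(i-1)` (whenever `i` is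
present), and let `M̃^i` be `M^i` with stack `t i` deleted.  If for each `i` a
capacity-feasible map of `B i` into `M̃^i` exists, then
`∑ i (|B i| + G^Z(M̃^i, B i)) ≤ ∑ i (|B i| + G^B(M̃^i, B i))`. -/
theorem ubalb_dominates_lb3 {w h n : ℕ} (hw : 0 < w) (S : YState w)
    (hyard : IsYard h n S) (t : ℕ → Fin w)
    (ht : ∀ i, 1 ≤ i → i ≤ n → ∀ j, i ∈ peelSeq S (i - 1) j → j = t i)
    (hfeas : ∀ i ∈ Finset.Icc 1 n, ∃ f : ℕ → Fin w,
      CapFeasibleOn h (peelSeq S i) (Finset.univ.erase (t i))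
        (aboveFinset (peelSeq S (i - 1)) i) f) :
    ∑ i ∈ Finset.Icc 1 n,
        ((aboveFinset (peelSeq S (i - 1)) i).card +
          GZval n (peelSeq S i) (Finset.univ.erase (t i))
            (aboveFinset (peelSeq S (i - 1)) i)) ≤
      ∑ i ∈ Finset.Icc 1 n,
        ((aboveFinset (peelSeq S (i - 1)) i).card +
          GBval h n (peelSeq S i) (Finset.univ.erase (t i))
            (aboveFinset (peelSeq S (i - 1)) i)) :=
  ubalb_dominates_lb3_general S t hfeas
end

section
/- Let M = M^0 be a yard with w stacks of height h containing blocks 1,…,n, and for i = 1,…,n define: if block i is present in M^{i−1}, let t_i be its stack and B_i the set of blocks located above i in stack t_i (listed top to bottom as the order φ_i), and let M^i be obtained from M^{i−1} by removing block i and all blocks of B_i; if block i is not present in M^{i−1}, set B_i = ∅ and M^i = M^{i−1}. Let M̃^i be M^i with stack t_i deleted, and let G*(M̃^i, B_i, φ_i) be the minimum number of blocking blocks over all capacity-feasible placements of the blocks of B_i on the stacks of M̃^i in the order φ_i (each stack j of M̃^i receiving at most h minus its height blocks; a placed block is blocking if it lies above a smaller block, either a block originally in the stack or an earlier-placed block of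 B_i). Assume that for each i a capacity-feasible placement of B_i into M̃^i exists. Then every feasible solution of the restricted Block Relocation Problem for M uses at least Σ_{i=1}^n (|B_i| + G*(M̃^i, B_i, φ_i)) reshuffle moves. -/
open Classical in
/-- The number of blocking blocks of the placement that puts the blocks of the list `L`
(in the order of `L`) on the stacks of the yard `Y`, block `L.get p` going to stack `a p`:
a placed block is blocking if it is larger than the value of its stack or larger than an
earlier placed block on the same stack. -/
noncomputable def placeBlockingCount {w : ℕ} (n : ℕ) (Y : YState w) (L : List ℕ)
    (a : Fin L.length → Fin w) : ℕ :=
  (Finset.univ.filter fun p : Fin L.length =>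
    sigmaVal n (Y (a p)) < L.get p ∨ ∃ q, q < p ∧ a q = a p ∧ L.get q < L.get p).card

open Classical in
/-- `G*(Y, L)` over the stacks `A`: the minimum number of blocking blocks over all
capacity-feasible placements of the blocks of `L`, in the order of `L`, on the stacks of
`A` (stack `j` receiving at most `h - (Y j).length` blocks). -/
noncomputable def GstarVal {w : ℕ} (h n : ℕ) (Y : YState w) (A : Finset (Fin w))
    (L : List ℕ) : ℕ :=
  sInf {c : ℕ | ∃ a : Fin L.length → Fin w, (∀ p, a p ∈ A) ∧
    (∀ j ∈ A,
      (Finset.univ.filter fun p : Fin L.length => a p = j).card ≤ h - (Y j).length) ∧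
    c = placeBlockingCount n Y L a}

/-!
Fix a feasible solution of the restricted BRP. While `i` is the minimum block, only blocks
above `i` may be reshuffled, so between the retrievals of `i - 1` and `i` the solution
unstacks the blocks above `i` one at a time and then retrieves `i`; meanwhile every other
stack only grows. Hence the peeled yard `M^(i-1)` always lies at the bottom of the real
yard, every block of `B_i` is reshuffled during phase `i`, and the stacks it is moved to form
a capacity-feasible placement of `B_i` on `M̃^i`. A block placed above a smaller block, of
`M^i` or of `B_i`, must be reshuffled once more before that block can be retrieved. So the
blocks of `B_i` are reshuffled at least `|B_i| + G*(M̃^i, B_i, φ_i)` times, and the sets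
`B_i` are pairwise disjoint.
-/

open Finset Function

theorem List.suffix_of_suffix_append_cons {α : Type*} {x : α} {l R : List α} :
    ∀ {G : List α}, l <:+ G ++ x :: R → x ∉ l → l <:+ R
  | [], hl, hx => (List.suffix_cons_iff.1 hl).resolve_left fun h => hx (h ▸ List.mem_cons_self)
  | _ :: _, hl, hx => by
    rcases List.suffix_cons_iff.1 hl with rfl | hl
    · simp at hx
    · exact List.suffix_of_suffix_append_cons hl hx

theorem List.pair_sublist_of_cons {α : Type*} {b c x : α} {l : List α}
    (h : [b, c].Sublist (x :: l)) (hbx : b ≠ x) : [b, c].Sublist l := by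
  rcases List.sublist_cons_iff.1 h with h | ⟨r, hr, _⟩
  · exact h
  · exact absurd (List.cons_eq_cons.1 hr).1 hbx

theorem exists_lt_of_sigmaVal_lt {n b : ℕ} (hb : b ≤ n + 1) :
    ∀ {l : List ℕ}, sigmaVal n l < b → ∃ c ∈ l, c < b
  | [], hl => by simp [sigmaVal] at hl; omega
  | a :: l, hl => by
    rcases min_lt_iff.1 hl with h | h
    · exact ⟨a, List.mem_cons_self, h⟩
    · obtain ⟨c, hc, hcb⟩ := exists_lt_of_sigmaVal_lt hb h
      exact ⟨c, List.mem_cons_of_mem _ hc, hcb⟩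

theorem List.takeWhile_append_cons_drop {i : ℕ} : ∀ {l : List ℕ}, i ∈ l →
    l.takeWhile (fun y => y != i) ++ i :: l.drop ((l.takeWhile fun y => y != i).length + 1) = l
  | a :: l, h => by
    by_cases hai : a = i
    · subst hai; simp
    · have := List.takeWhile_append_cons_drop (List.mem_of_ne_of_mem (Ne.symm hai) h)
      simp [hai, this]

section Yard

variable {w h : ℕ}

def blocks (Y : YState w) : Multiset ℕ := ∑ j, (Y j : Multiset ℕ)

def IsYardOn (h : ℕ) (B : Finset ℕ) (Y : YState w) : Prop :=
  (∀ j, (Y j).length ≤ h) ∧ blocks Y = B.val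

theorem mem_blocks {Y : YState w} {x : ℕ} : x ∈ blocks Y ↔ ∃ j, x ∈ Y j := by
  simp [blocks, Multiset.mem_sum]

theorem blocks_update (Y : YState w) (j : Fin w) (l : List ℕ) :
    blocks (update Y j l) + Y j = blocks Y + l := by
  classical
  unfold blocks
  rw [← add_sum_erase _ _ (mem_univ j), ← add_sum_erase univ (fun k => (Y k : Multiset ℕ))
    (mem_univ j), update_self,
    sum_congr rfl fun k hk => by rw [update_of_ne (ne_of_mem_erase hk)]]
  abel

theorem nodup_stack {Y : YState w} (hY : (blocks Y).Nodup) (j : Fin w) : (Y j).Nodup :=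
  Multiset.coe_nodup.1 <| Multiset.nodup_of_le
    (single_le_sum (f := fun j => (Y j : Multiset ℕ)) (fun _ _ => zero_le) (mem_univ j)) hY

theorem stack_eq_of_mem {Y : YState w} (hY : (blocks Y).Nodup) {x : ℕ} {i j : Fin w}
    (hi : x ∈ Y i) (hj : x ∈ Y j) : i = j := by
  by_contra hne
  have hle := add_le_sum (f := fun j => (Y j : Multiset ℕ)) (fun _ _ => zero_le)
    (mem_univ i) (mem_univ j) hne
  exact Multiset.disjoint_left.1 (Multiset.nodup_add.1 (Multiset.nodup_of_le hle hY)).2.2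
    (Multiset.mem_coe.2 hi) (Multiset.mem_coe.2 hj)

theorem IsYard.isYardOn {h n : ℕ} {Y : YState w} (hY : IsYard h n Y) :
    IsYardOn h (Ioc 0 n) Y := by
  refine ⟨hY.1, Multiset.ext.2 fun x => ?_⟩
  rw [Multiset.count_eq_of_nodup (Ioc 0 n).nodup, ← Icc_add_one_left_eq_Ioc, zero_add]
  simpa [blocks, Multiset.count_sum'] using hY.2 x

def movedBlock (Y : YState w) : BMove w → Option ℕ
  | .reshuffle s _ => (Y s).head?
  | .retrieval _ => none

theorem isReshuffle_of_movedBlock_eq_some {Y : YState w} {m : BMove w} {b : ℕ}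
    (h : movedBlock Y m = some b) : m.isReshuffle := by
  cases m <;> simp_all [movedBlock, BMove.isReshuffle]

theorem RStep.toBStep {Y Y' : YState w} {m : BMove w} (hst : RStep h Y m Y') :
    BStep h Y m Y' := by
  cases hst with
  | reshuffle src dst x t _ hsrc hne hcap => exact .reshuffle src dst x t hsrc hne hcap
  | retrieval src r t hsrc hmin => exact .retrieval src r t hsrc hmin

theorem suffix_update_update {Y : YState w} {s d j : Fin w} {T : List ℕ} {x : ℕ}
    (hj : j ≠ s) : Y j <:+ update (update Y s T) d (x :: Y d) j := by
  by_cases hjd : j = d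
  · subst hjd; simp
  · simp [update_of_ne hjd, update_of_ne hj]

/-- A retrieval cannot take `b`: it removes the minimum block, which is at most `c`. -/
theorem BStep.exists_pair_sublist {Y Y' : YState w} {m : BMove w} {b c : ℕ} {j : Fin w}
    (hst : BStep h Y m Y') (hb : movedBlock Y m ≠ some b) (hcb : c < b)
    (hsub : [b, c].Sublist (Y j)) : ∃ j', [b, c].Sublist (Y' j') := by
  cases hst with
  | reshuffle src dst x t hsrc hne hcap =>
    by_cases hj : j = src
    · subst hj
      refine ⟨j, ?_⟩
      rw [update_of_ne hne, update_self]
      exact List.pair_sublist_of_cons (hsrc ▸ hsub) fun hbx =>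
        hb (by simp [movedBlock, hsrc, hbx])
    · exact ⟨j, hsub.trans (suffix_update_update hj).sublist⟩
  | retrieval src r t hsrc hmin =>
    have hrb : b ≠ r := ((hmin j c (hsub.subset (by simp))).trans_lt hcb).ne'
    by_cases hj : j = src
    · subst hj
      exact ⟨j, by rw [update_self]; exact List.pair_sublist_of_cons (hsrc ▸ hsub) hrb⟩
    · exact ⟨j, by rw [update_of_ne hj]; exact hsub⟩

theorem blocks_reshuffle {Y : YState w} {s d : Fin w} {x : ℕ} {T : List ℕ}
    (hs : Y s = x :: T) (hsd : s ≠ d) :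
    blocks (update (update Y s T) d (x :: Y d)) = blocks Y := by
  have h1 := blocks_update Y s T
  have h2 := blocks_update (update Y s T) d (x :: Y d)
  rw [update_of_ne hsd.symm] at h2
  rw [hs] at h1
  simp only [← Multiset.cons_coe, ← Multiset.singleton_add] at h1 h2
  have e1 : {x} + blocks (update Y s T) = blocks Y :=
    add_right_cancel (b := (T : Multiset ℕ)) (by rw [← h1]; abel)
  have e2 : blocks (update (update Y s T) d (x :: Y d)) = {x} + blocks (update Y s T) :=
    add_right_cancel (b := (Y d : Multiset ℕ)) (by rw [h2]; abel)
  exact e2.trans e1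

theorem eq_add_one_of_forall_le {n k r : ℕ} {Y : YState w} {j : Fin w}
    (hY : blocks Y = (Ioc k n).val) (hr : r ∈ Y j) (hmin : ∀ j, ∀ y ∈ Y j, r ≤ y) :
    r = k + 1 := by
  have hmem : ∀ {x}, x ∈ Ioc k n ↔ ∃ j, x ∈ Y j := by
    intro x; rw [← mem_val, ← hY, mem_blocks]
  have hrk := mem_Ioc.1 (hmem.2 ⟨j, hr⟩)
  obtain ⟨j', hj'⟩ := hmem.1 (mem_Ioc.2 ⟨k.lt_succ_self, hrk.2.trans' hrk.1⟩)
  have := hmin j' _ hj'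
  omega

theorem BStep.isYardOn {n k : ℕ} {Y Y' : YState w} {m : BMove w} (hst : BStep h Y m Y')
    (hY : IsYardOn h (Ioc k n) Y) :
    IsYardOn h (Ioc (if m.isReshuffle then k else k + 1) n) Y' := by
  cases hst with
  | reshuffle src dst x t hsrc hne hcap =>
    refine ⟨fun j => ?_, (blocks_reshuffle hsrc hne).trans hY.2⟩
    have hsrcle := hY.1 src
    rw [hsrc, List.length_cons] at hsrcle
    by_cases hjd : j = dst
    · subst hjd; simp; omega
    by_cases hjs : j = src
    · subst hjs; simp [update_of_ne hjd]; omega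
    · simpa [update_of_ne hjd, update_of_ne hjs] using hY.1 j
  | retrieval src r t hsrc hmin =>
    have hr := eq_add_one_of_forall_le hY.2 (hsrc ▸ List.mem_cons_self) hmin
    subst hr
    refine ⟨fun j => ?_, ?_⟩
    · by_cases hjs : j = src
      · subst hjs; have := hY.1 j; rw [hsrc] at this; simp at this ⊢; omega
      · simpa [update_of_ne hjs] using hY.1 j
    · have hkn : k + 1 ≤ n := (mem_Ioc.1 (by rw [← mem_val, ← hY.2, mem_blocks]; exact
        ⟨src, hsrc ▸ List.mem_cons_self⟩)).2
      have h1 := blocks_update Y src t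
      rw [hsrc, hY.2, ← insert_Ioc_add_one_left_eq_Ioc (by omega),
        insert_val_of_notMem (by simp), ← Multiset.cons_coe, Multiset.add_cons,
        Multiset.cons_add, Multiset.cons_inj_right] at h1
      exact add_right_cancel h1

section ForcedSteps

variable {n k : ℕ} {Y Y' : YState w} {m : BMove w} {s : Fin w} {T : List ℕ}

theorem eq_add_one_and_eq_of_forall_le {r : ℕ} {src : Fin w} (hY : blocks Y = (Ioc k n).val)
    (hr : r ∈ Y src) (hmin : ∀ j, ∀ y ∈ Y j, r ≤ y) (hs : k + 1 ∈ Y s) : r = k + 1 ∧ src = s := by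
  obtain rfl := eq_add_one_of_forall_le hY hr hmin
  exact ⟨rfl, stack_eq_of_mem (hY ▸ (Ioc k n).nodup) hr hs⟩

theorem RStep.eq_reshuffle {g : ℕ} (hst : RStep h Y m Y') (hY : blocks Y = (Ioc k n).val)
    (hs : Y s = g :: T) (hT : k + 1 ∈ T) :
    ∃ d, d ≠ s ∧ m = .reshuffle s d ∧ Y' = update (update Y s T) d (g :: Y d) := by
  have hnd : (blocks Y).Nodup := hY ▸ (Ioc k n).nodup
  have hks : k + 1 ∈ Y s := hs ▸ List.mem_cons_of_mem _ hT
  cases hst with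
  | reshuffle src dst x t r hsrc hne hcap hr hmin =>
    obtain ⟨rfl, rfl⟩ :=
      eq_add_one_and_eq_of_forall_le hY (hsrc ▸ List.mem_cons_of_mem _ hr) hmin hks
    obtain ⟨rfl, rfl⟩ := List.cons_eq_cons.1 (hsrc.symm.trans hs)
    exact ⟨dst, hne.symm, rfl, rfl⟩
  | retrieval src r t hsrc hmin =>
    obtain ⟨rfl, rfl⟩ := eq_add_one_and_eq_of_forall_le hY (hsrc ▸ List.mem_cons_self) hmin hks
    have hnds := nodup_stack hnd src
    rw [hs, ← (List.cons_eq_cons.1 (hsrc.symm.trans hs)).1] at hnds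
    exact absurd hT (List.nodup_cons.1 hnds).1

theorem RStep.eq_retrieval (hst : RStep h Y m Y') (hY : blocks Y = (Ioc k n).val)
    (hs : Y s = (k + 1) :: T) : m = .retrieval s ∧ Y' = update Y s T := by
  have hnd : (blocks Y).Nodup := hY ▸ (Ioc k n).nodup
  have hks : k + 1 ∈ Y s := hs ▸ List.mem_cons_self
  cases hst with
  | reshuffle src dst x t r hsrc hne hcap hr hmin =>
    obtain ⟨rfl, rfl⟩ :=
      eq_add_one_and_eq_of_forall_le hY (hsrc ▸ List.mem_cons_of_mem _ hr) hmin hks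
    have hnds := nodup_stack hnd src
    rw [hs] at hnds
    obtain ⟨-, rfl⟩ := List.cons_eq_cons.1 (hsrc.symm.trans hs)
    exact absurd hr (List.nodup_cons.1 hnds).1
  | retrieval src r t hsrc hmin =>
    obtain ⟨rfl, rfl⟩ := eq_add_one_and_eq_of_forall_le hY (hsrc ▸ List.mem_cons_self) hmin hks
    obtain ⟨-, rfl⟩ := List.cons_eq_cons.1 (hsrc.symm.trans hs)
    exact ⟨rfl, rfl⟩

end ForcedSteps

section Peel

variable {Y : YState w} {i : ℕ} {j : Fin w}

theorem peel_of_not_mem (h : i ∉ Y j) : peel Y i j = Y j := by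
  simp [peel, h]

theorem aboveList_of_not_mem (h : i ∉ Y j) : aboveList Y i j = [] := by
  simp [aboveList, h]

theorem aboveList_append_peel (h : i ∈ Y j) : aboveList Y i j ++ i :: peel Y i j = Y j := by
  simp only [peel, aboveList, if_pos h]
  exact List.takeWhile_append_cons_drop h

theorem aboveList_sublist (Y : YState w) (i : ℕ) (j : Fin w) :
    (aboveList Y i j).Sublist (Y j) := by
  unfold aboveList
  split
  · exact List.takeWhile_sublist _
  · exact List.nil_sublist _

theorem peel_suffix (Y : YState w) (i : ℕ) (j : Fin w) : peel Y i j <:+ Y j := by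
  unfold peel
  split
  · exact List.drop_suffix _ _
  · exact List.suffix_refl _

theorem not_mem_peel (hnd : (Y j).Nodup) : i ∉ peel Y i j := by
  by_cases h : i ∈ Y j
  · rw [← aboveList_append_peel h] at hnd
    exact (List.nodup_cons.1 (hnd.sublist (List.sublist_append_right _ _))).1
  · rwa [peel_of_not_mem h]

theorem not_mem_peel_of_mem_aboveList (hY : (blocks Y).Nodup) {s : Fin w} {b : ℕ}
    (hb : b ∈ aboveList Y i s) : b ∉ peel Y i j := by
  have hi : i ∈ Y s := by
    by_contra hi
    simp [aboveList_of_not_mem hi] at hb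
  intro hbj
  have hsplit := aboveList_append_peel hi
  by_cases hjs : j = s
  · subst hjs
    have hnd := nodup_stack hY j
    rw [← hsplit] at hnd
    exact List.disjoint_of_nodup_append hnd hb (List.mem_cons_of_mem _ hbj)
  · exact hjs (stack_eq_of_mem hY ((peel_suffix Y i j).subset hbj)
      ((aboveList_sublist Y i s).subset hb))

end Peel

theorem peel_suffix_of_suffix {M : YState w} {s : Fin w} {x : ℕ} {G R : List ℕ}
    (hM : M s <:+ G ++ x :: R) (hnd : (G ++ x :: R).Nodup) : peel M x s <:+ R :=
  List.suffix_of_suffix_append_cons ((peel_suffix M x s).trans hM)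
    (not_mem_peel (hnd.sublist hM.sublist))

theorem nodup_blocks_peelSeq {Y : YState w} (hY : (blocks Y).Nodup) :
    ∀ k, (blocks (peelSeq Y k)).Nodup
  | 0 => hY
  | k + 1 => Multiset.nodup_of_le
      (sum_le_sum fun j _ => Multiset.coe_le.2 (peel_suffix _ (k + 1) j).sublist.subperm)
      (nodup_blocks_peelSeq hY k)

theorem peelSeq_suffix_of_le (Y : YState w) {k k' : ℕ} (hk : k ≤ k') (j : Fin w) :
    peelSeq Y k' j <:+ peelSeq Y k j := by
  induction k', hk using Nat.le_induction with
  | base => exact List.suffix_refl _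
  | succ k' _ ih => exact (peel_suffix _ _ j).trans ih

theorem pairwiseDisjoint_aboveList_peelSeq {Y : YState w} (hY : (blocks Y).Nodup)
    (t : ℕ → Fin w) :
    (Set.Ici 1).PairwiseDisjoint fun i => (aboveList (peelSeq Y (i - 1)) i (t i)).toFinset := by
  intro i hi i' hi' hne
  wlog hlt : i < i' generalizing i i'
  · exact (this hi' hi hne.symm (by omega)).symm
  simp only [Set.mem_Ici] at hi hi'
  obtain ⟨k, rfl⟩ : ∃ k, i = k + 1 := ⟨i - 1, by omega⟩
  rw [Function.onFun, List.disjoint_toFinset_iff_disjoint]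
  intro b hb hb'
  have hb'' := (peelSeq_suffix_of_le Y (show k + 1 ≤ i' - 1 by omega) (t i')).subset
    ((aboveList_sublist _ _ _).subset hb')
  exact not_mem_peel_of_mem_aboveList (nodup_blocks_peelSeq hY k) hb hb''

end Yard

section Run

variable {w h n K : ℕ} {S : ℕ → YState w} {mv : ℕ → BMove w}

structure IsRestrictedRun (h n K : ℕ) (S : ℕ → YState w) (mv : ℕ → BMove w) : Prop where
  init : IsYard h n (S 0)
  step : ∀ u < K, RStep h (S u) (mv u) (S (u + 1))
  final : ∀ j, S K j = []

def retrievals (mv : ℕ → BMove w) (u : ℕ) : ℕ :=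
  #{v ∈ range u | (mv v).isReshuffle = false}

theorem retrievals_succ (mv : ℕ → BMove w) (u : ℕ) :
    retrievals mv (u + 1) =
      if (mv u).isReshuffle then retrievals mv u else retrievals mv u + 1 := by
  unfold retrievals
  rw [range_add_one, filter_insert]
  cases (mv u).isReshuffle <;> simp [card_insert_of_notMem]

/-- Otherwise `b` would stay above `c` up to time `K`, when the yard is empty. -/
theorem exists_moved_of_pair_sublist (hstep : ∀ u < K, BStep h (S u) (mv u) (S (u + 1)))
    (hfinal : ∀ j, S K j = [])
    {u₀ b c : ℕ} {j : Fin w} (hu₀ : u₀ ≤ K) (hcb : c < b) (hsub : [b, c].Sublist (S u₀ j)) :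
    ∃ u ∈ Ico u₀ K, movedBlock (S u) (mv u) = some b := by
  by_contra! hno
  have key : ∀ u, u₀ ≤ u → u ≤ K → ∃ j, [b, c].Sublist (S u j) := by
    intro u hu
    induction u, hu using Nat.le_induction with
    | base => exact fun _ => ⟨j, hsub⟩
    | succ u hu ih =>
      intro huK
      obtain ⟨j, hj⟩ := ih (by omega)
      exact (hstep u huK).exists_pair_sublist (hno u (mem_Ico.2 ⟨hu, huK⟩)) hcb hj
  obtain ⟨j, hj⟩ := key K hu₀ le_rfl
  simpa [hfinal j] using hj.length_le

namespace IsRestrictedRun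

theorem isYardOn (hR : IsRestrictedRun h n K S mv) :
    ∀ u ≤ K, IsYardOn h (Ioc (retrievals mv u) n) (S u)
  | 0, _ => by simpa [retrievals] using hR.init.isYardOn
  | u + 1, hu => by
    rw [retrievals_succ]
    exact (hR.step u hu).toBStep.isYardOn (hR.isYardOn u (by omega))

variable {k : ℕ} {s : Fin w}

theorem nodup_blocks (hR : IsRestrictedRun h n K S mv) {u : ℕ} (hu : u ≤ K) :
    (blocks (S u)).Nodup := by
  rw [(hR.isYardOn u hu).2]
  exact (Ioc _ n).nodup

theorem lt_of_ne_nil (hR : IsRestrictedRun h n K S mv) {u : ℕ} {j : Fin w} (hu : u ≤ K)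
    (hne : S u j ≠ []) : u < K :=
  hu.lt_of_ne fun huK => hne (huK ▸ hR.final j)

theorem pop (hR : IsRestrictedRun h n K S mv) {u g : ℕ} {T : List ℕ} (hu : u ≤ K)
    (hret : retrievals mv u = k) (hs : S u s = g :: T) (hT : k + 1 ∈ T) :
    u < K ∧ retrievals mv (u + 1) = k ∧ ∃ d, d ≠ s ∧ mv u = .reshuffle s d ∧
      S (u + 1) = update (update (S u) s T) d (g :: S u d) := by
  have huK := hR.lt_of_ne_nil hu (hs ▸ List.cons_ne_nil _ _)
  obtain ⟨d, hds, hm, hS⟩ := (hR.step u huK).eq_reshuffle (hret ▸ (hR.isYardOn u hu).2) hs hT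
  refine ⟨huK, ?_, d, hds, hm, hS⟩
  rw [retrievals_succ, hm]
  exact hret

/-- Only blocks above the minimum `k + 1` may be reshuffled, so the run has to unstack them
one by one. -/
theorem pop_prefix (hR : IsRestrictedRun h n K S mv) {T : List ℕ} (hT : k + 1 ∈ T) :
    ∀ {G : List ℕ} {u : ℕ}, u ≤ K → retrievals mv u = k → S u s = G ++ T →
      u + G.length ≤ K ∧ retrievals mv (u + G.length) = k ∧ S (u + G.length) s = T ∧
        ∀ j ≠ s, S u j <:+ S (u + G.length) j
  | [], _, hu, hret, hs => ⟨hu, hret, hs, fun _ _ => List.suffix_refl _⟩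
  | g :: G, u, hu, hret, hs => by
    obtain ⟨huK, hret', d, hds, -, hS⟩ :=
      hR.pop hu hret (hs.trans (List.cons_append ..)) (List.mem_append_right G hT)
    have hs' : S (u + 1) s = G ++ T := by rw [hS, update_of_ne hds.symm, update_self]
    obtain ⟨hle, hret'', hsT, hgrow⟩ := hR.pop_prefix hT huK hret' hs'
    rw [List.length_cons, add_comm G.length, ← add_assoc]
    refine ⟨hle, hret'', hsT, fun j hj => ?_⟩
    exact (hS ▸ suffix_update_update hj).trans (hgrow j hj)

theorem exists_after_retrieval (hR : IsRestrictedRun h n K S mv) {v : ℕ} {G R : List ℕ}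
    (hv : v ≤ K) (hret : retrievals mv v = k) (hs : S v s = G ++ (k + 1) :: R) :
    ∃ v' ≤ K, retrievals mv v' = k + 1 ∧ S v' s = R ∧ ∀ j ≠ s, S v j <:+ S v' j := by
  obtain ⟨hu, hret', hs', hgrow⟩ := hR.pop_prefix List.mem_cons_self hv hret hs
  have huK := hR.lt_of_ne_nil hu (hs' ▸ List.cons_ne_nil _ _)
  obtain ⟨hm, hS⟩ := (hR.step _ huK).eq_retrieval (hret' ▸ (hR.isYardOn _ hu).2) hs'
  refine ⟨_, huK, ?_, by rw [hS, update_self], fun j hj => ?_⟩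
  · rw [retrievals_succ, hm, hret']
    rfl
  · rw [hS, update_of_ne hj]
    exact hgrow j hj

theorem exists_peelSeq_suffix (hR : IsRestrictedRun h n K S mv) :
    ∀ k ≤ n, ∃ v ≤ K, retrievals mv v = k ∧ ∀ j, peelSeq (S 0) k j <:+ S v j
  | 0, _ => ⟨0, zero_le, by simp [retrievals], fun _ => List.suffix_refl _⟩
  | k + 1, hk => by
    obtain ⟨v, hv, hret, hsuf⟩ := hR.exists_peelSeq_suffix k (by omega)
    obtain ⟨s, hs⟩ : ∃ s, k + 1 ∈ S v s := by
      rw [← mem_blocks, (hR.isYardOn v hv).2, hret, mem_val, mem_Ioc]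
      omega
    obtain ⟨G, R, hGR⟩ := List.append_of_mem hs
    obtain ⟨v', hv', hret', hs', hgrow⟩ := hR.exists_after_retrieval hv hret hGR
    refine ⟨v', hv', hret', fun j => ?_⟩
    by_cases hj : j = s
    · subst hj
      rw [hs']
      exact peel_suffix_of_suffix (hGR ▸ hsuf j) (hGR ▸ nodup_stack (hR.nodup_blocks hv) j)
    · exact (peel_suffix _ _ _).trans ((hsuf j).trans (hgrow j hj))

end IsRestrictedRun

def moveTimes (S : ℕ → YState w) (mv : ℕ → BMove w) (K b : ℕ) : Finset ℕ :=
  {u ∈ range K | movedBlock (S u) (mv u) = some b}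

theorem sum_card_moveTimes_le (S : ℕ → YState w) (mv : ℕ → BMove w) (K : ℕ) (B : Finset ℕ) :
    ∑ b ∈ B, #(moveTimes S mv K b) ≤
      ((List.range K).filter fun u => (mv u).isReshuffle).length := by
  rw [← card_biUnion]
  · calc _ ≤ #{u ∈ range K | (mv u).isReshuffle} := card_le_card fun u hu => by
          obtain ⟨b, -, hb⟩ := mem_biUnion.1 hu
          obtain ⟨hu, hm⟩ := mem_filter.1 hb
          exact mem_filter.2 ⟨hu, isReshuffle_of_movedBlock_eq_some hm⟩
      _ = _ := by simp [Finset.card, Finset.filter_val, Finset.range_val, Multiset.range]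
  · intro b _ b' _ hne
    rw [Function.onFun, disjoint_left]
    intro u hu hu'
    exact hne (Option.some_injective _ ((mem_filter.1 hu).2.symm.trans (mem_filter.1 hu').2))

structure RealizesPlacement (S : ℕ → YState w) (mv : ℕ → BMove w) (K v : ℕ) (s : Fin w)
    (L : List ℕ) (a : Fin L.length → Fin w) : Prop where
  le : v + L.length ≤ K
  ne : ∀ p, a p ≠ s
  moved : ∀ p : Fin L.length, movedBlock (S (v + p)) (mv (v + p)) = some (L.get p)
  push : ∀ p : Fin L.length, S (v + p + 1) (a p) = L.get p :: S (v + p) (a p)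
  mono : ∀ j ≠ s, ∀ p₁ p₂, p₁ ≤ p₂ → p₂ ≤ L.length → S (v + p₁) j <:+ S (v + p₂) j

theorem IsRestrictedRun.exists_realizesPlacement (hR : IsRestrictedRun h n K S mv)
    {v k : ℕ} {s : Fin w} {L T : List ℕ} (hv : v ≤ K) (hret : retrievals mv v = k)
    (hs : S v s = L ++ T) (hT : k + 1 ∈ T) : ∃ a, RealizesPlacement S mv K v s L a := by
  have hprefix : ∀ p ≤ L.length,
      v + p ≤ K ∧ retrievals mv (v + p) = k ∧ S (v + p) s = L.drop p ++ T := by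
    intro p hp
    have := hR.pop_prefix (G := L.take p) (List.mem_append_right _ hT) hv hret
      (by rw [hs, ← List.append_assoc, List.take_append_drop])
    rw [List.length_take, min_eq_left hp] at this
    exact ⟨this.1, this.2.1, this.2.2.1⟩
  have hstep : ∀ p : Fin L.length, ∃ d, d ≠ s ∧ mv (v + p) = .reshuffle s d ∧
      S (v + p) s = L.get p :: (L.drop (p + 1) ++ T) ∧
      S (v + p + 1) = update (update (S (v + p)) s (L.drop (p + 1) ++ T)) d
        (L.get p :: S (v + p) d) := by
    intro p
    obtain ⟨hle, hret', hsp⟩ := hprefix p p.isLt.le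
    rw [List.drop_eq_getElem_cons p.isLt, List.cons_append] at hsp
    obtain ⟨-, -, d, hds, hm, hS⟩ := hR.pop hle hret' hsp (List.mem_append_right _ hT)
    exact ⟨d, hds, hm, hsp, hS⟩
  choose a hne hm hsp hS using hstep
  refine ⟨a, (hprefix _ le_rfl).1, hne, fun p => ?_, fun p => ?_, ?_⟩
  · simp [movedBlock, hm p, hsp p]
  · rw [hS p, update_self]
  · intro j hj p₁ p₂ hp hp₂
    obtain ⟨h₁, h₂, h₃⟩ := hprefix p₁ (hp.trans hp₂)
    have := (hR.pop_prefix (G := (L.drop p₁).take (p₂ - p₁)) (List.mem_append_right _ hT)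
      h₁ h₂ (by rw [h₃, ← List.append_assoc, List.take_append_drop])).2.2.2 j hj
    rwa [List.length_take, List.length_drop, min_eq_left (by omega),
      show v + p₁ + (p₂ - p₁) = v + p₂ by omega] at this

namespace RealizesPlacement

variable {v : ℕ} {s : Fin w} {L : List ℕ} {a : Fin L.length → Fin w}

theorem card_filter_le (hP : RealizesPlacement S mv K v s L a) {j : Fin w} (hj : j ≠ s)
    {N : List ℕ} (hL : L.Nodup) (hLj : ∀ x ∈ L, x ∉ S v j) (hN : N <:+ S v j)
    (hh : (S (v + L.length) j).length ≤ h) : #{p | a p = j} ≤ h - N.length := by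
  obtain ⟨P, hPS⟩ := hP.mono j hj 0 L.length zero_le le_rfl
  rw [add_zero] at hPS
  have hmaps : ∀ p ∈ ({p | a p = j} : Finset _), L.get p ∈ P.toFinset := by
    intro p hp
    have hmem : L.get p ∈ S (v + L.length) j := by
      refine (hP.mono j hj (p + 1) L.length p.isLt le_rfl).subset ?_
      rw [← add_assoc, ← (mem_filter.1 hp).2, hP.push p]
      exact List.mem_cons_self
    rw [← hPS] at hmem
    exact List.mem_toFinset.2
      ((List.mem_append.1 hmem).resolve_right (hLj _ (List.get_mem ..)))
  have hlen := congrArg List.length hPS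
  rw [List.length_append] at hlen
  calc #{p | a p = j} ≤ #P.toFinset :=
        card_le_card_of_injOn _ hmaps (List.nodup_iff_injective_get.1 hL).injOn
    _ ≤ P.length := List.toFinset_card_le P
    _ ≤ h - N.length := by have := hN.length_le; omega

theorem exists_lt_mem (hP : RealizesPlacement S mv K v s L a) {N : YState w}
    (hN : ∀ j ≠ s, N j <:+ S v j) (hLn : ∀ x ∈ L, x ≤ n) {p : Fin L.length}
    (hblk : sigmaVal n (N (a p)) < L.get p ∨ ∃ q, q < p ∧ a q = a p ∧ L.get q < L.get p) :
    ∃ c < L.get p, c ∈ S (v + p) (a p) := by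
  rcases hblk with hσ | ⟨q, hqp, hq, hlt⟩
  · obtain ⟨c, hc, hcp⟩ :=
      exists_lt_of_sigmaVal_lt (Nat.le_succ_of_le (hLn _ (List.get_mem ..))) hσ
    have hsuf := (hN _ (hP.ne p)).trans (hP.mono _ (hP.ne p) 0 p zero_le p.isLt.le)
    exact ⟨c, hcp, hsuf.subset hc⟩
  · refine ⟨L.get q, hlt, (hP.mono _ (hP.ne p) (q + 1) p hqp p.isLt.le).subset ?_⟩
    rw [← add_assoc, ← hq, hP.push q]
    exact List.mem_cons_self

theorem one_add_ite_le_card_moveTimes (hP : RealizesPlacement S mv K v s L a)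
    (hstep : ∀ u < K, BStep h (S u) (mv u) (S (u + 1))) (hfinal : ∀ j, S K j = [])
    {N : YState w} (hN : ∀ j ≠ s, N j <:+ S v j) (hLn : ∀ x ∈ L, x ≤ n) (p : Fin L.length) :
    1 + (if sigmaVal n (N (a p)) < L.get p ∨ ∃ q, q < p ∧ a q = a p ∧ L.get q < L.get p
      then 1 else 0) ≤ #(moveTimes S mv K (L.get p)) := by
  have hle := hP.le
  have hfirst : v + p ∈ moveTimes S mv K (L.get p) :=
    mem_filter.2 ⟨mem_range.2 (by omega), hP.moved p⟩
  split_ifs with hblk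
  · obtain ⟨c, hc, hcmem⟩ := hP.exists_lt_mem hN hLn hblk
    have hsub : [L.get p, c].Sublist (S (v + p + 1) (a p)) := by
      rw [hP.push p]
      exact List.cons_sublist_cons.2 (List.singleton_sublist.2 hcmem)
    obtain ⟨u, hu, hmoved⟩ := exists_moved_of_pair_sublist hstep hfinal (by omega) hc hsub
    have hu' := mem_Ico.1 hu
    have hsecond : u ∈ moveTimes S mv K (L.get p) := mem_filter.2 ⟨mem_range.2 hu'.2, hmoved⟩
    have := one_lt_card.2 ⟨_, hfirst, _, hsecond, by omega⟩
    omega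
  · have := card_pos.2 ⟨_, hfirst⟩
    omega

end RealizesPlacement

theorem GstarVal_nil (h n : ℕ) (Y : YState w) (A : Finset (Fin w)) : GstarVal h n Y A [] = 0 :=
  Nat.eq_zero_of_le_zero <| Nat.sInf_le
    ⟨fun p => p.elim0, fun p => p.elim0, fun j _ => by simp, by simp [placeBlockingCount]⟩

/-- The moves by which the solution unstacks the blocks above `k + 1` form a feasible
placement of them. -/
theorem IsRestrictedRun.length_add_GstarVal_le (hR : IsRestrictedRun h n K S mv)
    {v k : ℕ} {M : YState w} (hv : v ≤ K) (hret : retrievals mv v = k)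
    (hM : ∀ j, M j <:+ S v j) (s : Fin w) :
    (aboveList M (k + 1) s).length +
        GstarVal h n (peel M (k + 1)) (univ.erase s) (aboveList M (k + 1) s) ≤
      ∑ b ∈ (aboveList M (k + 1) s).toFinset, #(moveTimes S mv K b) := by
  by_cases hks : k + 1 ∉ M s
  · simp [aboveList_of_not_mem hks, GstarVal_nil]
  set L := aboveList M (k + 1) s
  obtain ⟨E, hE⟩ := hM s
  obtain ⟨hv₁, hret₁, hs₁, hgrow⟩ := hR.pop_prefix
    (List.mem_append_right _ List.mem_cons_self) hv hret
    (by rw [← hE, ← aboveList_append_peel (not_not.1 hks)])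
  obtain ⟨a, hP⟩ := hR.exists_realizesPlacement hv₁ hret₁ hs₁ List.mem_cons_self
  have hnd := hR.nodup_blocks hv₁
  have hLs : ∀ x ∈ L, x ∈ S (v + E.length) s := fun x hx => hs₁ ▸ List.mem_append_left _ hx
  have hL : L.Nodup := (nodup_stack hnd s).sublist (hs₁ ▸ List.sublist_append_left _ _)
  have hN : ∀ j ≠ s, peel M (k + 1) j <:+ S (v + E.length) j :=
    fun j hj => (peel_suffix M _ j).trans ((hM j).trans (hgrow j hj))
  have hLn : ∀ x ∈ L, x ≤ n := fun x hx => by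
    have := (hR.isYardOn _ hv₁).2 ▸ mem_blocks.2 ⟨s, hLs x hx⟩
    simp only [mem_val, mem_Ioc] at this
    exact this.2
  have hGstar : GstarVal h n (peel M (k + 1)) (univ.erase s) L ≤
      placeBlockingCount n (peel M (k + 1)) L a := by
    refine Nat.sInf_le ⟨a, fun p => mem_erase.2 ⟨hP.ne p, mem_univ _⟩, fun j hj => ?_, rfl⟩
    have hj := ne_of_mem_erase hj
    exact hP.card_filter_le hj hL (fun x hx hxj => hj (stack_eq_of_mem hnd hxj (hLs x hx)))
      (hN j hj) ((hR.isYardOn _ hP.le).1 j)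
  calc L.length + GstarVal h n (peel M (k + 1)) (univ.erase s) L
      ≤ ∑ p : Fin L.length, (1 + if sigmaVal n (peel M (k + 1) (a p)) < L.get p ∨
          ∃ q, q < p ∧ a q = a p ∧ L.get q < L.get p then 1 else 0) := by
        rw [sum_add_distrib, ← card_filter]
        simpa [placeBlockingCount] using hGstar
    _ ≤ ∑ p : Fin L.length, #(moveTimes S mv K (L.get p)) := sum_le_sum fun p _ =>
        hP.one_add_ite_le_card_moveTimes (fun u hu => (hR.step u hu).toBStep) hR.final hN hLn p
    _ = ∑ b ∈ L.toFinset, #(moveTimes S mv K b) := by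
        rw [List.sum_toFinset _ hL, ← Fin.sum_univ_fun_getElem]
        rfl

end Run

theorem eq1_lower_bound_valid_general {w h n K : ℕ} (S0 : YState w)
    (hyard : IsYard h n S0) (t : ℕ → Fin w)
    (S : ℕ → YState w) (mv : ℕ → BMove w) (hS0 : S 0 = S0)
    (hstep : ∀ u < K, RStep h (S u) (mv u) (S (u + 1)))
    (hend : ∀ j, S K j = []) :
    ∑ i ∈ Finset.Icc 1 n,
        ((aboveList (peelSeq S0 (i - 1)) i (t i)).length +
          GstarVal h n (peelSeq S0 i) (Finset.univ.erase (t i))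
            (aboveList (peelSeq S0 (i - 1)) i (t i))) ≤
      ((List.range K).filter fun u => (mv u).isReshuffle).length := by
  have hR : IsRestrictedRun h n K S mv := ⟨hS0 ▸ hyard, hstep, hend⟩
  have hphase : ∀ i ∈ Icc 1 n, (aboveList (peelSeq S0 (i - 1)) i (t i)).length +
      GstarVal h n (peelSeq S0 i) (univ.erase (t i)) (aboveList (peelSeq S0 (i - 1)) i (t i)) ≤
      ∑ b ∈ (aboveList (peelSeq S0 (i - 1)) i (t i)).toFinset, #(moveTimes S mv K b) := by
    intro i hi
    obtain ⟨k, rfl⟩ : ∃ k, i = k + 1 := ⟨i - 1, by simp at hi; omega⟩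
    obtain ⟨v, hv, hret, hsuf⟩ := hR.exists_peelSeq_suffix k (by simp at hi; omega)
    exact hR.length_add_GstarVal_le hv hret (hS0 ▸ hsuf) (t (k + 1))
  have hdisj := (pairwiseDisjoint_aboveList_peelSeq (hyard.isYardOn.2 ▸ (Ioc 0 n).nodup)
    t).subset (fun i hi => by simp at hi ⊢; omega : (Icc 1 n : Set ℕ) ⊆ Set.Ici 1)
  calc _ ≤ _ := sum_le_sum hphase
    _ = _ := (sum_biUnion hdisj).symm
    _ ≤ _ := sum_card_moveTimes_le S mv K _

/-- (Validity of the lower bound of equation (1).)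
Let `M^i = peelSeq S0 i` be the peeling sequence of the yard `S0`, `t i` the stack of
block `i` in `M^(i-1)` (whenever present), `L i = aboveList (M^(i-1)) i (t i)` the blocks
above `i` listed top to bottom, and `M̃^i` the yard `M^i` with stack `t i` deleted.
If for each `i` a capacity-feasible placement of `L i` into `M̃^i` exists, then every
feasible solution of the **restricted** BRP for `S0` uses at least
`∑ i (|B i| + G*(M̃^i, B i, φ i))` reshuffle moves. -/
theorem eq1_lower_bound_valid {w h n K : ℕ} (hw : 0 < w) (S0 : YState w)
    (hyard : IsYard h n S0) (t : ℕ → Fin w)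
    (ht : ∀ i, 1 ≤ i → i ≤ n → ∀ j, i ∈ peelSeq S0 (i - 1) j → j = t i)
    (hfeas : ∀ i ∈ Finset.Icc 1 n,
      ∃ a : Fin (aboveList (peelSeq S0 (i - 1)) i (t i)).length → Fin w,
        (∀ p, a p ∈ Finset.univ.erase (t i)) ∧
        ∀ j ∈ Finset.univ.erase (t i),
          (Finset.univ.filter fun p => a p = j).card ≤ h - (peelSeq S0 i j).length)
    (S : ℕ → YState w) (mv : ℕ → BMove w) (hS0 : S 0 = S0)
    (hstep : ∀ u < K, RStep h (S u) (mv u) (S (u + 1)))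
    (hend : ∀ j, S K j = []) :
    ∑ i ∈ Finset.Icc 1 n,
        ((aboveList (peelSeq S0 (i - 1)) i (t i)).length +
          GstarVal h n (peelSeq S0 i) (Finset.univ.erase (t i))
            (aboveList (peelSeq S0 (i - 1)) i (t i))) ≤
      ((List.range K).filter fun u => (mv u).isReshuffle).length :=
  eq1_lower_bound_valid_general S0 hyard t S mv hS0 hstep hend
end
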